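/- arXiv:2006.05100 — 2 statements merged into one kernel-verified Lean document; each statement's English description precedes it below -/
import Mathlib

section
/- Let G be a finite group and H a normal subgroup of G such that for any g ∈ G with g² ∈ H, there exists h ∈ H such that (gh)² = e. Then there exists an inverse-closed subset S₀ of G \ {e} such that H is a perfect code in Cay(G,S₀). -/
/-- The Cayley graph of a group `G` with connection set `S`:
`x` is adjacent to `y` iff `y * x⁻¹ ∈ S` (symmetrized; for inverse-closed `S`
not containing `1` this is the usual Cayley graph). -/
def cayley {G : Type*} [Group G] (S : Set G) : SimpleGraph G :=
  SimpleGraph.fromRel (fun x y => y * x⁻¹ ∈ S)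

/-- `C` is an `(a,b)`-regular set in `Γ`: every vertex in `C` has exactly `a`
neighbors in `C`, and every vertex outside `C` has exactly `b` neighbors in `C`. -/
def IsRegularSet {V : Type*} (Γ : SimpleGraph V) (C : Set V) (a b : ℕ) : Prop :=
  (∀ v ∈ C, (Γ.neighborSet v ∩ C).ncard = a) ∧
  (∀ v ∉ C, (Γ.neighborSet v ∩ C).ncard = b)

/-!
Choose a transversal `r` of `G ⧸ H` with `r C⁻¹ = (r C)⁻¹`: on the involutions of `G ⧸ H` the
hypothesis provides representatives of order at most two, and every other coset is paired with its
inverse. Take `S₀ = r '' {1}ᶜ`. The neighbours of `v` in `cayley S₀` are the `s * v` with `s ∈ S₀`,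
and `s * v ∈ H` exactly when `s` lies in the coset `(v : G ⧸ H)⁻¹`. Hence a vertex of `H` has no
neighbour in `H`, and any other vertex `v` has the single neighbour `r (v : G ⧸ H)⁻¹ * v` in `H`.
-/

theorem exists_section_inv {α β : Type*} [InvolutiveInv α] [InvolutiveInv β] {p : β → α}
    (hp_surj : Function.Surjective p) (hp_inv : ∀ b, p b⁻¹ = (p b)⁻¹)
    (hfix : ∀ a, a⁻¹ = a → ∃ b, p b = a ∧ b⁻¹ = b) :
    ∃ r : α → β, (∀ a, p (r a) = a) ∧ ∀ a, r a⁻¹ = (r a)⁻¹ := by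
  classical
  have hlift : ∀ a, ∃ b, p b = a ∧ (a⁻¹ = a → b⁻¹ = b) := fun a =>
    if ha : a⁻¹ = a then (hfix a ha).imp fun _ hb => ⟨hb.1, fun _ => hb.2⟩
    else (hp_surj a).imp fun _ hb => ⟨hb, fun h => absurd h ha⟩
  choose t ht_lift ht_fix using hlift
  -- of each pair `{a, a⁻¹}` we lift the smaller element and invert that lift for the other
  let : LinearOrder α := linearOrderOfSTO WellOrderingRel
  refine ⟨fun a => if a ≤ a⁻¹ then t a else (t a⁻¹)⁻¹, fun a => ?_, fun a => ?_⟩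
  · dsimp only
    split_ifs
    · exact ht_lift a
    · rw [hp_inv, ht_lift, inv_inv]
  · rcases lt_trichotomy a a⁻¹ with h | h | h
    · simp [h.le, h.not_ge]
    · simp [← h, ht_fix a h.symm]
    · simp [h.le, h.not_ge]

theorem exists_mk_eq_of_inv_eq {G : Type*} [Group G] {H : Subgroup G} [H.Normal]
    (hcond : ∀ g : G, g ^ 2 ∈ H → ∃ h ∈ H, (g * h) ^ 2 = 1) (C : G ⧸ H) (hC : C⁻¹ = C) :
    ∃ g : G, (g : G ⧸ H) = C ∧ g⁻¹ = g := by
  obtain ⟨g, rfl⟩ := QuotientGroup.mk_surjective C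
  have hg : g ^ 2 ∈ H := by
    rw [← QuotientGroup.eq_one_iff, QuotientGroup.mk_pow, sq, ← inv_eq_iff_mul_eq_one.mp hC]
  obtain ⟨h, hh, hgh⟩ := hcond g hg
  refine ⟨g * h, ?_, inv_eq_of_mul_eq_one_right (by rwa [← sq])⟩
  rw [QuotientGroup.mk_mul, (QuotientGroup.eq_one_iff h).mpr hh, mul_one]

theorem cayley_adj_iff {G : Type*} [Group G] {S : Set G} (hS_inv : S⁻¹ = S) (hS_one : 1 ∉ S)
    {x y : G} : (cayley S).Adj x y ↔ y * x⁻¹ ∈ S := by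
  refine (SimpleGraph.fromRel_adj _ x y).trans ⟨?_, fun h => ⟨?_, Or.inl h⟩⟩
  · rintro ⟨-, h | h⟩
    · exact h
    · rwa [← hS_inv, Set.mem_inv, mul_inv_rev, inv_inv]
  · rintro rfl
    exact hS_one (by rwa [mul_inv_cancel] at h)

theorem cayley_neighborSet {G : Type*} [Group G] {S : Set G} (hS_inv : S⁻¹ = S) (hS_one : 1 ∉ S)
    (v : G) : (cayley S).neighborSet v = (· * v) '' S := by
  ext w
  rw [SimpleGraph.mem_neighborSet, cayley_adj_iff hS_inv hS_one]
  exact ⟨fun h => ⟨w * v⁻¹, h, inv_mul_cancel_right w v⟩, by rintro ⟨s, hs, rfl⟩; simpa⟩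

theorem ncard_cayley_neighborSet_inter {G : Type*} [Group G] {S : Set G} (hS_inv : S⁻¹ = S)
    (hS_one : 1 ∉ S) (v : G) (C : Set G) :
    ((cayley S).neighborSet v ∩ C).ncard = (S ∩ (· * v) ⁻¹' C).ncard := by
  rw [cayley_neighborSet hS_inv hS_one, ← Set.image_inter_preimage,
    Set.ncard_image_of_injective _ (mul_left_injective v)]

section InvSection

variable {G : Type*} [Group G] {H : Subgroup G} [H.Normal] {r : G ⧸ H → G}

theorem inv_image_compl_one (hr_inv : ∀ C, r C⁻¹ = (r C)⁻¹) :
    (r '' {1}ᶜ)⁻¹ = r '' {1}ᶜ := by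
  rw [← Set.image_inv_eq_inv, Set.image_image]
  simp_rw [← hr_inv]
  rw [← Set.image_image r Inv.inv, Set.image_inv_eq_inv, Set.compl_inv, Set.inv_singleton, inv_one]

theorem one_notMem_image_compl_one (hr : ∀ C, (r C : G ⧸ H) = C) : (1 : G) ∉ r '' {1}ᶜ := by
  rintro ⟨C, hC, hC1⟩
  exact hC (Set.mem_singleton_iff.mpr (by rw [← hr C, hC1, QuotientGroup.mk_one]))

theorem image_compl_one_inter_preimage_mul_right (hr : ∀ C, (r C : G ⧸ H) = C) (v : G) :
    r '' {1}ᶜ ∩ (· * v) ⁻¹' H = r '' ({1}ᶜ ∩ {(v : G ⧸ H)⁻¹}) := by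
  rw [← Set.image_inter_preimage]
  congr 2
  ext C
  simp [← QuotientGroup.eq_one_iff, hr, mul_eq_one_iff_eq_inv]

end InvSection

theorem stmt8_general {G : Type*} [Group G] (H : Subgroup G) [H.Normal]
    (hcond : ∀ g : G, g ^ 2 ∈ H → ∃ h ∈ H, (g * h) ^ 2 = 1) :
    ∃ S₀ : Set G, S₀⁻¹ = S₀ ∧ (1 : G) ∉ S₀ ∧
      IsRegularSet (cayley S₀) (H : Set G) 0 1 := by
  obtain ⟨r, hr, hr_inv⟩ := exists_section_inv QuotientGroup.mk_surjective
    (fun _ => QuotientGroup.mk_inv _ _) (exists_mk_eq_of_inv_eq hcond)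
  have hS_inv := inv_image_compl_one hr_inv
  have hS_one := one_notMem_image_compl_one hr
  have hr_inj : Function.Injective r := Function.LeftInverse.injective hr
  refine ⟨r '' {1}ᶜ, hS_inv, hS_one, fun v hv => ?_, fun v hv => ?_⟩ <;>
    rw [ncard_cayley_neighborSet_inter hS_inv hS_one, image_compl_one_inter_preimage_mul_right hr,
      Set.ncard_image_of_injective _ hr_inj]
  · simp [(QuotientGroup.eq_one_iff v).mpr hv]
  · have hv' : (v : G ⧸ H)⁻¹ ≠ 1 := inv_ne_one.mpr (mt (QuotientGroup.eq_one_iff v).mp hv)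
    rw [Set.inter_eq_right.mpr (Set.singleton_subset_iff.mpr hv'), Set.ncard_singleton]

theorem stmt8 {G : Type*} [Group G] [Fintype G] (H : Subgroup G) [H.Normal]
    (hcond : ∀ g : G, g ^ 2 ∈ H → ∃ h ∈ H, (g * h) ^ 2 = 1) :
    ∃ S₀ : Set G, S₀⁻¹ = S₀ ∧ (1 : G) ∉ S₀ ∧
      IsRegularSet (cayley S₀) (H : Set G) 0 1 :=
  stmt8_general H hcond
end

section
/- Let G be a finite group, H a normal subgroup of G, and a an integer with 0 ≤ a ≤ |H| − 1 such that gcd(2, |H|−1) divides a. Then there exists an inverse-closed subset S of G \ {e} such that H is an (a, |H|)-regular set in Cay(G,S). -/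
section Involution

open Function Set Finset

variable {α : Type*} [DecidableEq α] {f : α → α}

theorem Finset.mapsTo_sdiff_of_involutive (hf : Involutive f) {s t : Finset α}
    (hs : MapsTo f s s) (ht : MapsTo f t t) : MapsTo f ↑(s \ t) ↑(s \ t) := by
  intro x hx
  simp only [Finset.coe_sdiff, Set.mem_sdiff, Finset.mem_coe] at hx ⊢
  exact ⟨hs hx.1, fun hfx => hx.2 (hf x ▸ ht hfx)⟩

theorem Finset.exists_mapsTo_subset_card_eq_two_mul (hf : Involutive f) (k : ℕ) :
    ∀ {T : Finset α}, MapsTo f T T → 2 * k ≤ #T →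
      ∃ A ⊆ T, MapsTo f A A ∧ #A = 2 * k := by
  induction k with
  | zero => exact fun _ _ => ⟨∅, by simp⟩
  | succ k ih =>
    intro T hT hk
    by_cases hfix : ∀ x ∈ T, f x = x
    · obtain ⟨A, hAT, hA⟩ := Finset.exists_subset_card_eq hk
      exact ⟨A, hAT, fun x hx => by rwa [hfix x (hAT hx)], hA⟩
    push Not at hfix
    obtain ⟨x, hxT, hfx⟩ := hfix
    set P : Finset α := {x, f x}
    have hPT : P ⊆ T := Finset.insert_subset hxT (Finset.singleton_subset_iff.mpr (hT hxT))
    have hP : MapsTo f P P := by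
      intro y hy
      simp only [P, Finset.coe_insert, Finset.coe_singleton, Set.mem_insert_iff,
        Set.mem_singleton_iff] at hy ⊢
      rcases hy with rfl | rfl
      · exact Or.inr rfl
      · exact Or.inl (hf x)
    have hPcard : #P = 2 := Finset.card_pair hfx.symm
    obtain ⟨A, hAT, hA, hAcard⟩ := ih (Finset.mapsTo_sdiff_of_involutive hf hT hP)
      (by rw [Finset.card_sdiff_of_subset hPT]; omega)
    have hAP : Disjoint A P := Finset.disjoint_of_subset_left hAT Finset.sdiff_disjoint
    refine ⟨A ∪ P, Finset.union_subset (hAT.trans Finset.sdiff_subset) hPT, ?_, ?_⟩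
    · rw [Finset.coe_union]
      exact (hA.mono_right Set.subset_union_left).union (hP.mono_right Set.subset_union_right)
    · rw [Finset.card_union_of_disjoint hAP, hAcard, hPcard]
      ring

theorem Finset.exists_mapsTo_subset_card_eq (hf : Involutive f) {T : Finset α}
    (hT : MapsTo f T T) {k : ℕ} (hk : k ≤ #T) (hgcd : Nat.gcd 2 #T ∣ k) :
    ∃ A ⊆ T, MapsTo f A A ∧ #A = k := by
  rcases Nat.even_or_odd' k with ⟨j, rfl | rfl⟩
  · exact Finset.exists_mapsTo_subset_card_eq_two_mul hf j hT hk
  have hTodd : Odd #T := by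
    rw [Nat.odd_iff]
    by_contra hTeven
    have h2 : Nat.gcd 2 #T = 2 := Nat.gcd_eq_left (Nat.dvd_of_mod_eq_zero (by omega))
    rw [h2] at hgcd
    omega
  obtain ⟨i, hi⟩ := hTodd
  obtain ⟨B, hBT, hB, hBcard⟩ :=
    Finset.exists_mapsTo_subset_card_eq_two_mul hf (i - j) hT (by omega)
  refine ⟨T \ B, Finset.sdiff_subset, Finset.mapsTo_sdiff_of_involutive hf hT hB, ?_⟩
  rw [Finset.card_sdiff_of_subset hBT]
  omega

end Involution

section Cayley

open Set Finset Pointwise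

variable {G : Type*} [Group G]

theorem Subgroup.exists_inv_eq_subset_ncard_eq (H : Subgroup G) {a : ℕ}
    (ha : a ≤ Nat.card H - 1) (hdvd : Nat.gcd 2 (Nat.card H - 1) ∣ a) :
    ∃ A : Set G, A ⊆ (H : Set G) \ {1} ∧ A⁻¹ = A ∧ A.ncard = a := by
  classical
  rcases (Nat.card H).eq_zero_or_pos with hH | hH
  · exact ⟨∅, Set.empty_subset _, Set.inv_empty, by simp; omega⟩
  have : Finite H := Nat.finite_of_card_ne_zero hH.ne'
  set T := ((H : Set G) \ {1}).toFinite.toFinset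
  have hTcard : #T = Nat.card H - 1 := by
    rw [← Set.ncard_eq_toFinset_card _ (Set.toFinite _),
      Set.ncard_sdiff_singleton_of_mem (one_mem H), ← Nat.card_coe_set_eq, SetLike.coe_sort_coe]
  have hT : MapsTo Inv.inv (T : Set G) T := by
    intro x
    simp [T]
  obtain ⟨A, hAT, hA, rfl⟩ :=
    Finset.exists_mapsTo_subset_card_eq inv_involutive hT (hTcard ▸ ha) (hTcard ▸ hdvd)
  have hAinv : (A : Set G) ⊆ (A : Set G)⁻¹ := hA
  refine ⟨A, ?_, ?_, Set.ncard_coe_finset A⟩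
  · simpa [T] using Finset.coe_subset.mpr hAT
  · exact (Set.inv_subset.mpr hAinv).antisymm hAinv

theorem cayley_adj {S : Set G} (hS : S⁻¹ = S) (h1 : (1 : G) ∉ S) {x y : G} :
    (cayley S).Adj x y ↔ y * x⁻¹ ∈ S := by
  have hsymm : x * y⁻¹ ∈ S ↔ y * x⁻¹ ∈ S := by
    rw [← hS, Set.mem_inv, mul_inv_rev, inv_inv, hS]
  rw [cayley, SimpleGraph.fromRel_adj, hsymm, or_self, and_iff_right_iff_imp]
  rintro hyx rfl
  exact h1 (mul_inv_cancel x ▸ hyx)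

theorem cayley_neighborSet_s9 {S : Set G} (hS : S⁻¹ = S) (h1 : (1 : G) ∉ S) (v : G) :
    (cayley S).neighborSet v = (· * v⁻¹) ⁻¹' S :=
  Set.ext fun _ => cayley_adj hS h1

variable (H : Subgroup G) {A : Set G}

theorem inv_union_compl_eq (hA : A⁻¹ = A) : (A ∪ (H : Set G)ᶜ)⁻¹ = A ∪ (H : Set G)ᶜ := by
  rw [Set.union_inv, Set.compl_inv, hA, inv_coe_set]

theorem one_notMem_union_compl (hAH : A ⊆ (H : Set G) \ {1}) : (1 : G) ∉ A ∪ (H : Set G)ᶜ := by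
  rintro (h | h)
  · exact (hAH h).2 rfl
  · exact h (one_mem H)

theorem isRegularSet_cayley_union_compl (hAH : A ⊆ (H : Set G) \ {1}) (hA : A⁻¹ = A) :
    IsRegularSet (cayley (A ∪ (H : Set G)ᶜ)) H A.ncard (Nat.card H) := by
  rw [IsRegularSet]
  simp_rw [cayley_neighborSet_s9 (inv_union_compl_eq H hA) (one_notMem_union_compl H hAH)]
  constructor
  · intro v hv
    have hnbr : (· * v⁻¹) ⁻¹' (A ∪ (H : Set G)ᶜ) ∩ H = (· * v) '' A := by
      rw [Set.image_mul_right]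
      ext w
      have hwv : w * v⁻¹ ∈ H ↔ w ∈ H := H.mul_mem_cancel_right (inv_mem hv)
      constructor
      · rintro ⟨hA' | hH', hw⟩
        · exact hA'
        · exact absurd (hwv.mpr hw) hH'
      · intro hA'
        exact ⟨Or.inl hA', hwv.mp (hAH hA').1⟩
    rw [hnbr, Set.ncard_image_of_injective _ (mul_left_injective v)]
  · intro v hv
    have hnbr : (· * v⁻¹) ⁻¹' (A ∪ (H : Set G)ᶜ) ∩ H = H := by
      refine Set.inter_eq_right.mpr fun w hw => Or.inr fun hwv => hv ?_
      exact inv_mem_iff.mp ((H.mul_mem_cancel_left hw).mp hwv)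
    rw [hnbr, ← Nat.card_coe_set_eq, SetLike.coe_sort_coe]

end Cayley

theorem stmt9_general {G : Type*} [Group G] (H : Subgroup G)
    (a : ℕ) (ha : a ≤ Nat.card H - 1) (hdvd : Nat.gcd 2 (Nat.card H - 1) ∣ a) :
    ∃ S : Set G, S⁻¹ = S ∧ (1 : G) ∉ S ∧
      IsRegularSet (cayley S) (H : Set G) a (Nat.card H) := by
  obtain ⟨A, hAH, hA, rfl⟩ := H.exists_inv_eq_subset_ncard_eq ha hdvd
  exact ⟨A ∪ (H : Set G)ᶜ, inv_union_compl_eq H hA, one_notMem_union_compl H hAH,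
    isRegularSet_cayley_union_compl H hAH hA⟩

theorem stmt9 {G : Type*} [Group G] [Fintype G] (H : Subgroup G) [H.Normal]
    (a : ℕ) (ha : a ≤ Nat.card H - 1) (hdvd : Nat.gcd 2 (Nat.card H - 1) ∣ a) :
    ∃ S : Set G, S⁻¹ = S ∧ (1 : G) ∉ S ∧
      IsRegularSet (cayley S) (H : Set G) a (Nat.card H) :=
  stmt9_general H a ha hdvd
end
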